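/- arXiv:2410.03970 — 7 statements merged into one kernel-verified Lean document; each statement's English description precedes it below -/
import Mathlib

section
/- CROP residuals lie in Krylov subspaces (Lemma 4.4, containment form): In the linear setting f(x) = b − A·x, for any CROP sequence (with arbitrary truncation parameters and arbitrary coefficient vectors summing to 1), the control residual f_C^(k) belongs to the Krylov subspace K_{k+1}(A, f_C^(0)) = span{f_C^(0), A·f_C^(0), …, A^k·f_C^(0)} for every k ∈ ℕ; consequently span{f_C^(0), …, f_C^(k)} ⊆ K_{k+1}(A, f_C^(0)). -/
abbrev Euc (n : ℕ) := EuclideanSpace ℝ (Fin n)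

/-- A CROP sequence for the residual function `f`, with truncation parameters
`m (k+1) ≥ 1` and coefficient vectors `coef (k+1)` summing to one. -/
structure CROPSeq (n : ℕ) (f : Euc n → Euc n) where
  x : ℕ → Euc n
  fc : ℕ → Euc n
  xt : ℕ → Euc n
  ft : ℕ → Euc n
  m : ℕ → ℕ
  coef : ℕ → ℕ → ℝ
  m_pos : ∀ k, 1 ≤ m (k + 1)
  m_le : ∀ k, m (k + 1) ≤ k + 1
  fc_zero : fc 0 = f (x 0)
  xt_succ : ∀ k, xt (k + 1) = x k + fc k
  ft_succ : ∀ k, ft (k + 1) = f (xt (k + 1))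
  coef_sum : ∀ k, ∑ i ∈ Finset.range (m (k + 1) + 1), coef (k + 1) i = 1
  x_succ : ∀ k, x (k + 1) =
    (∑ i ∈ Finset.range (m (k + 1)), coef (k + 1) i • x (k + 1 - m (k + 1) + i))
      + coef (k + 1) (m (k + 1)) • xt (k + 1)
  fc_succ : ∀ k, fc (k + 1) =
    (∑ i ∈ Finset.range (m (k + 1)), coef (k + 1) i • fc (k + 1 - m (k + 1) + i))
      + coef (k + 1) (m (k + 1)) • ft (k + 1)

/-- Least-squares optimality of the CROP coefficients. -/
def CROPSeq.Optimal {n : ℕ} {f : Euc n → Euc n} (s : CROPSeq n f) : Prop :=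
  ∀ k, ∀ β : ℕ → ℝ, (∑ i ∈ Finset.range (s.m (k + 1) + 1), β i = 1) →
    ‖s.fc (k + 1)‖ ≤
      ‖(∑ i ∈ Finset.range (s.m (k + 1)), β i • s.fc (k + 1 - s.m (k + 1) + i))
        + β (s.m (k + 1)) • s.ft (k + 1)‖

/-- The Krylov subspace `K_j(A, v) = span {v, A v, …, A^(j-1) v}`. -/
def krylov {n : ℕ} (A : Euc n →L[ℝ] Euc n) (v : Euc n) (j : ℕ) :
    Submodule ℝ (Euc n) :=
  Submodule.span ℝ {w | ∃ i < j, w = (A ^ i) v}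


lemma krylov_mono {n : ℕ} (A : Euc n →L[ℝ] Euc n) (v : Euc n) {j j' : ℕ} (h : j ≤ j') :
    krylov A v j ≤ krylov A v j' :=
  Submodule.span_mono (fun _ ⟨i, hi, hw⟩ => ⟨i, lt_of_lt_of_le hi h, hw⟩)

lemma map_mem_krylov {n : ℕ} {A : Euc n →L[ℝ] Euc n} {v w : Euc n} {j : ℕ}
    (h : w ∈ krylov A v j) : A w ∈ krylov A v (j + 1) := by
  have h1 : A w ∈ Submodule.map (A : Euc n →ₗ[ℝ] Euc n) (krylov A v j) :=
    ⟨w, h, rfl⟩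
  rw [krylov, Submodule.map_span] at h1
  refine Submodule.span_le.2 ?_ h1
  rintro u ⟨z, ⟨i, hi, rfl⟩, rfl⟩
  exact Submodule.subset_span ⟨i + 1, by omega, by simp [pow_succ']⟩

/-- **Lemma 4.4 (containment form).** In the linear setting, the control residual
`f_C^(k)` lies in the Krylov subspace `K_(k+1)(A, f_C^(0))`, and consequently
`span {f_C^(0), …, f_C^(k)} ⊆ K_(k+1)(A, f_C^(0))`. -/
theorem crop_residuals_mem_krylov {n : ℕ}
    (A : Euc n →L[ℝ] Euc n) (b : Euc n)
    (s : CROPSeq n (fun x => b - A x)) :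
    (∀ k : ℕ, s.fc k ∈ krylov A (s.fc 0) (k + 1)) ∧
    (∀ k : ℕ, Submodule.span ℝ {w | ∃ j ≤ k, w = s.fc j} ≤ krylov A (s.fc 0) (k + 1)) := by

  -- Step 1: fc k = b - A (x k)
  have fc_eq : ∀ k, s.fc k = b - A (s.x k) := by
    intro k
    induction k using Nat.strong_induction_on with
    | _ k ih =>
      match k with
      | 0 => exact s.fc_zero
      | k + 1 =>
        have hm1 := s.m_pos k
        have hm2 := s.m_le k
        have key := s.coef_sum k
        rw [Finset.sum_range_succ] at key
        have hsum : (∑ i ∈ Finset.range (s.m (k+1)), s.coef (k+1) i)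
            = 1 - s.coef (k+1) (s.m (k+1)) := by linarith
        rw [s.fc_succ k, s.x_succ k, s.ft_succ k, s.xt_succ k]
        have hre : (∑ i ∈ Finset.range (s.m (k+1)), s.coef (k+1) i • s.fc (k + 1 - s.m (k+1) + i))
            = ∑ i ∈ Finset.range (s.m (k+1)), s.coef (k+1) i • (b - A (s.x (k + 1 - s.m (k+1) + i))) := by
          refine Finset.sum_congr rfl fun i hi => ?_
          rw [ih _ (by simp only [Finset.mem_range] at hi; omega)]
        rw [hre]
        simp only [smul_sub, Finset.sum_sub_distrib, map_add, map_sum, map_smul,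
          ← Finset.sum_smul, hsum]
        module
  -- Step 2: ft (k+1) = fc k - A (fc k)
  have ft_eq : ∀ k, s.ft (k + 1) = s.fc k - A (s.fc k) := by
    intro k
    rw [s.ft_succ k, s.xt_succ k, fc_eq k]
    simp only [map_add]
    abel
  have hmem : ∀ k, s.fc k ∈ krylov A (s.fc 0) (k + 1) := by
    intro k
    induction k using Nat.strong_induction_on with
    | _ k ih =>
      match k with
      | 0 => exact Submodule.subset_span ⟨0, by omega, by simp⟩
      | k + 1 =>
        have hm1 := s.m_pos k
        have hm2 := s.m_le k
        rw [s.fc_succ k]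
        refine Submodule.add_mem _ (Submodule.sum_mem _ fun i hi => ?_)
          (Submodule.smul_mem _ _ ?_)
        · simp only [Finset.mem_range] at hi
          refine Submodule.smul_mem _ _ ?_
          exact krylov_mono A _ (by omega) (ih _ (by omega))
        · rw [ft_eq k]
          refine Submodule.sub_mem _ ?_ ?_
          · exact krylov_mono A _ (by omega) (ih k (by omega))
          · exact map_mem_krylov (ih k (by omega))
  refine ⟨hmem, fun k => Submodule.span_le.2 ?_⟩
  rintro w ⟨j, hj, rfl⟩
  exact krylov_mono A _ (by omega) (hmem j)
end

section
/- q-linear convergence of CROP for linear problems (Theorem 5.1): In the linear setting f(x) = b − A·x, suppose ‖I − A‖ ≤ c < 1 in the operator norm induced by the Euclidean norm. Let (x_C^(k), f_C^(k)) be a CROP sequence (arbitrary truncation parameters m_{k+1} ≥ 1) whose coefficients are least-squares optimal (in fact it suffices that ‖f_C^(k+1)‖₂ ≤ ‖f̃_C^(k+1)‖₂ for all k). Then for every k ∈ ℕ: ‖f_C^(k+1)‖₂ ≤ ‖f̃_C^(k+1)‖₂ ≤ c·‖f_C^(k)‖₂; consequently ‖f_C^(k)‖₂ ≤ c^k·‖f_C^(0)‖₂,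 and since the control residuals are the real residuals, ‖b − A·x_C^(k)‖₂ ≤ c^k·‖b − A·x_C^(0)‖₂, i.e., both residual sequences converge q-linearly to zero with q-factor c. -/
set_option maxHeartbeats 1000000 in
/-- **Theorem 5.1.** In the linear setting `f(x) = b - A x` with `‖I - A‖ ≤ c < 1`,
for a CROP sequence satisfying `‖f_C^(k+1)‖ ≤ ‖f̃_C^(k+1)‖` (which holds for
least-squares optimal coefficients), the control and real residuals converge
q-linearly to zero with q-factor `c`. -/
theorem crop_linear_q_linear_convergence {n : ℕ}
    (A : Euc n →L[ℝ] Euc n) (b : Euc n) (c : ℝ)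
    (hc : ‖ContinuousLinearMap.id ℝ (Euc n) - A‖ ≤ c) (hc1 : c < 1)
    (s : CROPSeq n (fun x => b - A x))
    (hopt : ∀ k : ℕ, ‖s.fc (k + 1)‖ ≤ ‖s.ft (k + 1)‖) :
    (∀ k : ℕ, ‖s.fc (k + 1)‖ ≤ ‖s.ft (k + 1)‖ ∧ ‖s.ft (k + 1)‖ ≤ c * ‖s.fc k‖) ∧
    (∀ k : ℕ, ‖s.fc k‖ ≤ c ^ k * ‖s.fc 0‖) ∧
    (∀ k : ℕ, ‖b - A (s.x k)‖ ≤ c ^ k * ‖b - A (s.x 0)‖) := by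

  have hc0 : 0 ≤ c := le_trans (norm_nonneg _) hc
  -- control residuals are the real residuals
  have key : ∀ k, s.fc k = b - A (s.x k) := by
    intro k
    induction k using Nat.strong_induction_on with
    | _ k ih =>
      match k with
      | 0 => simpa using s.fc_zero
      | Nat.succ k =>
        have hm := s.m_pos k
        have hml := s.m_le k
        have hft : s.ft (k+1) = b - A (s.x k + s.fc k) := by
          rw [s.ft_succ, s.xt_succ]
        rw [s.fc_succ, s.x_succ, hft, s.xt_succ]
        have hx : ∀ i ∈ Finset.range (s.m (k+1)),
            s.coef (k+1) i • s.fc (k+1 - s.m (k+1) + i)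
              = s.coef (k+1) i • (b - A (s.x (k+1 - s.m (k+1) + i))) := by
          intro i hi
          have hi' := Finset.mem_range.mp hi
          rw [ih _ (by omega)]
        rw [Finset.sum_congr rfl hx]
        have hsum := s.coef_sum k
        rw [Finset.sum_range_succ] at hsum
        simp only [smul_sub, Finset.sum_sub_distrib, ← Finset.sum_smul, map_add,
          map_sum, map_smul, hsum]
        have hb : (∑ x ∈ Finset.range (s.m (k+1)), s.coef (k+1) x) • b
            = b - s.coef (k+1) (s.m (k+1)) • b := by
          rw [eq_sub_iff_add_eq, ← add_smul, hsum, one_smul]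
        rw [hb]
        abel
  have hftk : ∀ k, s.ft (k+1) = (ContinuousLinearMap.id ℝ (Euc n) - A) (s.fc k) := by
    intro k
    rw [s.ft_succ, s.xt_succ, key k]
    simp [sub_sub, map_add]
  have hft_bound : ∀ k : ℕ, ‖s.ft (k+1)‖ ≤ c * ‖s.fc k‖ := by
    intro k
    rw [hftk k]
    calc ‖(ContinuousLinearMap.id ℝ (Euc n) - A) (s.fc k)‖
        ≤ ‖ContinuousLinearMap.id ℝ (Euc n) - A‖ * ‖s.fc k‖ :=
          (ContinuousLinearMap.id ℝ (Euc n) - A).le_opNorm _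
      _ ≤ c * ‖s.fc k‖ := by
          exact mul_le_mul_of_nonneg_right hc (norm_nonneg _)
  have hgeo : ∀ k : ℕ, ‖s.fc k‖ ≤ c ^ k * ‖s.fc 0‖ := by
    intro k
    induction k with
    | zero => simp
    | succ k ih =>
      calc ‖s.fc (k+1)‖ ≤ ‖s.ft (k+1)‖ := hopt k
        _ ≤ c * ‖s.fc k‖ := hft_bound k
        _ ≤ c * (c ^ k * ‖s.fc 0‖) := by
            exact mul_le_mul_of_nonneg_left ih hc0
        _ = c ^ (k+1) * ‖s.fc 0‖ := by ring
  refine ⟨fun k => ⟨hopt k, hft_bound k⟩, hgeo, fun k => ?_⟩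
  rw [← key k, ← key 0]
  exact hgeo k
end

section
/- Error bound for CROP on linear problems (consequence of Theorem 5.1): In the linear setting f(x) = b − A·x, suppose ‖I − A‖ ≤ c < 1 in the operator norm induced by the Euclidean norm (so that A is invertible with exact solution x* = A⁻¹·b). Let (x_C^(k), f_C^(k)) be a CROP sequence (arbitrary truncation parameters m_{k+1} ≥ 1) satisfying ‖f_C^(k+1)‖₂ ≤ ‖f̃_C^(k+1)‖₂ for all k. Then for every k ∈ ℕ: ‖x_C^(k) − x*‖₂ ≤ ((1 + c)/(1 − c))·c^k·‖x_C^(0) − x*‖₂; in particular x_C^(k) converges to x*. -/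
lemma affine_comb {E : Type*} [NormedAddCommGroup E] [NormedSpace ℝ E]
    (A : E →L[ℝ] E) (b t : E) (M : ℕ) (α : ℕ → ℝ) (y : ℕ → E)
    (hS : ∑ i ∈ Finset.range M, α i = 1 - α M) :
    (∑ i ∈ Finset.range M, α i • (b - A (y i))) + α M • (b - A t)
    = b - A ((∑ i ∈ Finset.range M, α i • y i) + α M • t) := by
  rw [map_add, map_sum]
  simp only [map_smul, smul_sub, Finset.sum_sub_distrib, ← Finset.sum_smul, hS,
    sub_smul, one_smul]
  abel

/-- **Error bound (consequence of Theorem 5.1).** In the linear setting with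
`‖I - A‖ ≤ c < 1`, the matrix `A` is invertible, and the CROP iterates converge to
the exact solution `x*` with `‖x_C^(k) - x*‖ ≤ ((1+c)/(1-c)) c^k ‖x_C^(0) - x*‖`. -/
theorem crop_linear_error_bound {n : ℕ}
    (A : Euc n →L[ℝ] Euc n) (b : Euc n) (c : ℝ)
    (hc : ‖ContinuousLinearMap.id ℝ (Euc n) - A‖ ≤ c) (hc1 : c < 1)
    (s : CROPSeq n (fun x => b - A x))
    (hopt : ∀ k : ℕ, ‖s.fc (k + 1)‖ ≤ ‖s.ft (k + 1)‖) :
    Function.Bijective A ∧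
    ∃ xstar : Euc n, A xstar = b ∧
      (∀ k : ℕ, ‖s.x k - xstar‖ ≤ ((1 + c) / (1 - c)) * c ^ k * ‖s.x 0 - xstar‖) ∧
      Filter.Tendsto s.x Filter.atTop (nhds xstar) := by
  set B := ContinuousLinearMap.id ℝ (Euc n) - A with hB
  have hc0 : 0 ≤ c := le_trans (norm_nonneg _) hc
  have hBv : ∀ v : Euc n, ‖B v‖ ≤ c * ‖v‖ := fun v =>
    le_trans (B.le_opNorm v) (mul_le_mul_of_nonneg_right hc (norm_nonneg v))
  have hBv' : ∀ v : Euc n, B v = v - A v := by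
    intro v; simp [hB]
  have hlow : ∀ v : Euc n, (1 - c) * ‖v‖ ≤ ‖A v‖ := by
    intro v
    have h1 : ‖v‖ ≤ ‖A v‖ + ‖B v‖ := by
      calc ‖v‖ = ‖A v + B v‖ := by rw [hBv' v]; congr 1; abel
      _ ≤ _ := norm_add_le _ _
    have := hBv v
    nlinarith [norm_nonneg v]
  have hup : ∀ v : Euc n, ‖A v‖ ≤ (1 + c) * ‖v‖ := by
    intro v
    calc ‖A v‖ = ‖v - B v‖ := by rw [hBv' v]; congr 1; abel
    _ ≤ ‖v‖ + ‖B v‖ := norm_sub_le _ _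
    _ ≤ ‖v‖ + c * ‖v‖ := by linarith [hBv v]
    _ = (1 + c) * ‖v‖ := by ring
  have hinj : Function.Injective A := by
    intro u v huv
    have h : A (u - v) = 0 := by rw [map_sub, huv, sub_self]
    have h1 := hlow (u - v)
    rw [h, norm_zero] at h1
    have h2 : ‖u - v‖ ≤ 0 := by nlinarith [norm_nonneg (u - v)]
    have h3 : u - v = 0 := by rwa [← norm_le_zero_iff]
    exact sub_eq_zero.mp h3
  have hsurj : Function.Surjective A := by
    have := (LinearMap.injective_iff_surjective
      (f := (A : Euc n →ₗ[ℝ] Euc n))).mp hinj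
    exact this
  obtain ⟨xstar, hxstar⟩ := hsurj b
  -- residuals track the iterates
  have hfc : ∀ k, s.fc k = b - A (s.x k) := by
    intro k
    induction k using Nat.strong_induction_on with
    | _ k ih =>
      match k with
      | 0 => simpa using s.fc_zero
      | Nat.succ k =>
        have hm := s.m_pos k
        have hml := s.m_le k
        set M := s.m (k + 1) with hM
        set α := s.coef (k + 1) with hα
        have hx : ∀ i ∈ Finset.range M,
            α i • s.fc (k + 1 - M + i) = α i • (b - A (s.x (k + 1 - M + i))) := by
          intro i hi
          have hi' := Finset.mem_range.mp hi
          rw [ih (k + 1 - M + i) (by omega)]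
        have hfk : s.fc k = b - A (s.x k) := ih k (by omega)
        rw [s.fc_succ k, s.x_succ k, s.ft_succ k, s.xt_succ k, ← hM, ← hα,
          Finset.sum_congr rfl hx, hfk]
        have hS : ∑ i ∈ Finset.range M, α i = 1 - α M := by
          have h := s.coef_sum k
          rw [← hM, ← hα, Finset.sum_range_succ] at h
          linarith
        exact affine_comb A b _ M α _ hS
  -- ft in terms of B applied to fc
  have hft : ∀ k, s.ft (k + 1) = B (s.fc k) := by
    intro k
    rw [s.ft_succ k, s.xt_succ k, hBv' (s.fc k)]
    simp only [map_add, hfc k]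
    abel
  -- geometric decay of residuals
  have hdecay : ∀ k, ‖s.fc k‖ ≤ c ^ k * ‖s.fc 0‖ := by
    intro k
    induction k with
    | zero => simp
    | succ k ih =>
      have h1 : ‖s.fc (k + 1)‖ ≤ c * ‖s.fc k‖ := by
        calc ‖s.fc (k + 1)‖ ≤ ‖s.ft (k + 1)‖ := hopt k
        _ = ‖B (s.fc k)‖ := by rw [hft k]
        _ ≤ c * ‖s.fc k‖ := hBv _
      calc ‖s.fc (k + 1)‖ ≤ c * ‖s.fc k‖ := h1
      _ ≤ c * (c ^ k * ‖s.fc 0‖) := mul_le_mul_of_nonneg_left ih hc0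
      _ = c ^ (k + 1) * ‖s.fc 0‖ := by ring
  have hfc0 : ‖s.fc 0‖ ≤ (1 + c) * ‖s.x 0 - xstar‖ := by
    have h : s.fc 0 = A (xstar - s.x 0) := by
      rw [hfc 0, map_sub, hxstar]
    rw [h]
    calc ‖A (xstar - s.x 0)‖ ≤ (1 + c) * ‖xstar - s.x 0‖ := hup _
    _ = (1 + c) * ‖s.x 0 - xstar‖ := by rw [norm_sub_rev]
  have hbound : ∀ k, ‖s.x k - xstar‖ ≤ ((1 + c) / (1 - c)) * c ^ k * ‖s.x 0 - xstar‖ := by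
    intro k
    have h1 : (1 - c) * ‖s.x k - xstar‖ ≤ ‖s.fc k‖ := by
      have h : s.fc k = A (xstar - s.x k) := by rw [hfc k, map_sub, hxstar]
      rw [h]
      calc (1 - c) * ‖s.x k - xstar‖ = (1 - c) * ‖xstar - s.x k‖ := by
            rw [norm_sub_rev]
      _ ≤ ‖A (xstar - s.x k)‖ := hlow _
    have h2 := hdecay k
    have hpos : (0:ℝ) < 1 - c := by linarith
    rw [div_mul_eq_mul_div, div_mul_eq_mul_div, le_div_iff₀ hpos]
    nlinarith [pow_nonneg hc0 k, norm_nonneg (s.x 0 - xstar), norm_nonneg (s.x k - xstar)]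
  refine ⟨⟨hinj, hsurj⟩, xstar, hxstar, hbound, ?_⟩
  rw [tendsto_iff_norm_sub_tendsto_zero]
  have hlim : Filter.Tendsto (fun k : ℕ => ((1 + c) / (1 - c)) * c ^ k * ‖s.x 0 - xstar‖)
      Filter.atTop (nhds 0) := by
    have h0 : Filter.Tendsto (fun k : ℕ => c ^ k) Filter.atTop (nhds 0) :=
      tendsto_pow_atTop_nhds_zero_of_lt_one hc0 hc1
    have := (h0.const_mul ((1 + c) / (1 - c))).mul_const ‖s.x 0 - xstar‖
    simpa using this
  exact squeeze_zero (fun k => norm_nonneg _) hbound hlim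
end

section
/- Affine representation of CROP iterates in terms of trial vectors (representation used in Section 5.2): Let f : ℝⁿ → ℝⁿ be arbitrary, and let (x_C^(k), f_C^(k), x̃_C^(k), f̃_C^(k)) be a CROP sequence with arbitrary truncation parameters m_{k+1} ≥ 1 and arbitrary coefficient vectors summing to 1. Set x̃_C^(0) = x_C^(0) and f̃_C^(0) = f_C^(0). Then for every k ∈ ℕ there exist real numbers s_0^(k), …, s_k^(k) with Σ_{j=0}^k s_j^(k) = 1 such that simultaneously x_C^(k) = Σ_{j=0}^k s_j^(k)·x̃_C^(j) and f_C^(k) = Σ_{j=0}^k s_j^(k)·f̃_C^(j) (the same coefficients for both). -/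
/-- Algebraic combination step used in the induction. -/
lemma crop_combine_aux {n : ℕ} (k m : ℕ) (hm1 : 1 ≤ m) (hm2 : m ≤ k + 1)
    (c : ℕ → ℝ) (T : ℕ → ℕ → ℝ) (y yt : Euc n) (yseq ytseq : ℕ → Euc n)
    (hy : ∀ i < m, yseq (k + 1 - m + i) =
      T (k + 1 - m + i) 0 • y +
        ∑ j ∈ Finset.range (k + 1), T (k + 1 - m + i) (j + 1) • ytseq (j + 1))
    (hrec : yseq (k + 1) =
      (∑ i ∈ Finset.range m, c i • yseq (k + 1 - m + i)) + c m • ytseq (k + 1)) :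
    yseq (k + 1) =
      ((∑ i ∈ Finset.range m, c i * T (k + 1 - m + i) 0) +
          if (0 : ℕ) = k + 1 then c m else 0) • y
      + ∑ j ∈ Finset.range (k + 1),
          ((∑ i ∈ Finset.range m, c i * T (k + 1 - m + i) (j + 1)) +
            if j + 1 = k + 1 then c m else 0) • ytseq (j + 1) := by
  have h0 : ¬ ((0 : ℕ) = k + 1) := by omega
  rw [if_neg h0, add_zero]
  have expand : ∀ j ∈ Finset.range (k + 1),
      ((∑ i ∈ Finset.range m, c i * T (k + 1 - m + i) (j + 1)) +
          if j + 1 = k + 1 then c m else 0) • ytseq (j + 1)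
      = (∑ i ∈ Finset.range m, c i • (T (k + 1 - m + i) (j + 1) • ytseq (j + 1)))
        + (if j = k then c m • ytseq (j + 1) else 0) := by
    intro j hj
    rw [add_smul, Finset.sum_smul, ite_smul, zero_smul]
    congr 1
    · exact Finset.sum_congr rfl fun i _ => by rw [mul_smul]
    · congr 1
      simp [Nat.succ_inj]
  rw [Finset.sum_congr rfl expand, Finset.sum_add_distrib]
  have hlast : (∑ j ∈ Finset.range (k + 1),
      if j = k then c m • ytseq (j + 1) else 0) = c m • ytseq (k + 1) := by
    rw [Finset.sum_ite_eq' (Finset.range (k + 1)) k (fun j => c m • ytseq (j + 1))]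
    simp
  rw [hlast, Finset.sum_comm]
  have hfirst : (∑ i ∈ Finset.range m, c i * T (k + 1 - m + i) 0) • y
      = ∑ i ∈ Finset.range m, c i • (T (k + 1 - m + i) 0 • y) := by
    rw [Finset.sum_smul]
    exact Finset.sum_congr rfl fun i _ => by rw [mul_smul]
  rw [hfirst, hrec, ← add_assoc, ← Finset.sum_add_distrib]
  congr 1
  refine Finset.sum_congr rfl fun i hi => ?_
  rw [hy i (Finset.mem_range.mp hi), smul_add, Finset.smul_sum]

/-- **Affine representation of CROP iterates (Section 5.2).** For an arbitrary map `f`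
and any CROP sequence, each iterate `x_C^(k)` and control residual `f_C^(k)` can be
written simultaneously as affine combinations (with the same coefficients summing to 1)
of the trial vectors `x̃_C^(0) = x_C^(0), x̃_C^(1), …, x̃_C^(k)` and trial residuals
`f̃_C^(0) = f_C^(0), f̃_C^(1), …, f̃_C^(k)`, respectively. -/
theorem crop_affine_representation {n : ℕ}
    (f : Euc n → Euc n) (s : CROPSeq n f) :
    ∀ k : ℕ, ∃ t : ℕ → ℝ,
      (∑ j ∈ Finset.range (k + 1), t j = 1) ∧
      s.x k = t 0 • s.x 0 + ∑ j ∈ Finset.range k, t (j + 1) • s.xt (j + 1) ∧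
      s.fc k = t 0 • s.fc 0 + ∑ j ∈ Finset.range k, t (j + 1) • s.ft (j + 1) := by
  have main : ∀ k : ℕ, ∃ t : ℕ → ℝ,
      (∀ j, k < j → t j = 0) ∧
      (∑ j ∈ Finset.range (k + 1), t j = 1) ∧
      s.x k = t 0 • s.x 0 + ∑ j ∈ Finset.range k, t (j + 1) • s.xt (j + 1) ∧
      s.fc k = t 0 • s.fc 0 + ∑ j ∈ Finset.range k, t (j + 1) • s.ft (j + 1) := by
    intro k
    induction k using Nat.strong_induction_on with
    | _ k IH =>
    match k, IH with
    | 0, _ =>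
      refine ⟨fun j => if j = 0 then 1 else 0, ?_, ?_, ?_, ?_⟩
      · intro j hj
        show (if j = 0 then (1:ℝ) else 0) = 0
        rw [if_neg (by omega)]
      · simp
      · simp
      · simp
    | (k + 1), IH =>
      set m := s.m (k + 1) with hmdef
      set c := s.coef (k + 1) with hcdef
      have hm1 : 1 ≤ m := s.m_pos k
      have hm2 : m ≤ k + 1 := s.m_le k
      have IH' : ∀ l : ℕ, ∃ t : ℕ → ℝ, l < k + 1 →
          ((∀ j, l < j → t j = 0) ∧
           (∑ j ∈ Finset.range (l + 1), t j = 1) ∧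
           s.x l = t 0 • s.x 0 + ∑ j ∈ Finset.range l, t (j + 1) • s.xt (j + 1) ∧
           s.fc l = t 0 • s.fc 0 + ∑ j ∈ Finset.range l, t (j + 1) • s.ft (j + 1)) := by
        intro l
        by_cases h : l < k + 1
        · obtain ⟨t, ht⟩ := IH l h
          exact ⟨t, fun _ => ht⟩
        · exact ⟨fun _ => 0, fun h' => absurd h' h⟩
      choose T hT using IH'
      -- extend representation sums to range (k+1)
      have hext : ∀ l, l < k + 1 → ∀ vt : ℕ → Euc n,
          ∑ j ∈ Finset.range l, T l (j + 1) • vt (j + 1)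
            = ∑ j ∈ Finset.range (k + 1), T l (j + 1) • vt (j + 1) := by
        intro l hl vt
        apply Finset.sum_subset (Finset.range_subset_range.mpr (by omega))
        intro j hj hj'
        rw [(hT l hl).1 (j + 1) (by simp only [Finset.mem_range] at hj'; omega),
          zero_smul]
      have hextsum : ∀ l, l < k + 1 →
          ∑ j ∈ Finset.range (k + 2), T l j = 1 := by
        intro l hl
        rw [← (hT l hl).2.1]
        symm
        apply Finset.sum_subset (Finset.range_subset_range.mpr (by omega))
        intro j hj hj'
        exact (hT l hl).1 j (by simp only [Finset.mem_range] at hj'; omega)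
      have hlt : ∀ i, i < m → k + 1 - m + i < k + 1 := by intro i hi; omega
      refine ⟨fun j => (∑ i ∈ Finset.range m, c i * T (k + 1 - m + i) j) +
          if j = k + 1 then c m else 0, ?_, ?_, ?_, ?_⟩
      · intro j hj
        show (∑ i ∈ Finset.range m, c i * T (k + 1 - m + i) j) +
          (if j = k + 1 then c m else 0) = 0
        rw [if_neg (by omega), add_zero]
        refine Finset.sum_eq_zero fun i hi => ?_
        have hi' := Finset.mem_range.mp hi
        rw [(hT _ (hlt i hi')).1 j (by omega), mul_zero]
      · rw [Finset.sum_add_distrib, Finset.sum_comm]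
        have : (∑ j ∈ Finset.range (k + 1 + 1), if j = k + 1 then c m else 0)
            = c m := by
          rw [Finset.sum_ite_eq' (Finset.range (k + 2)) (k + 1) (fun _ => c m)]
          simp
        rw [this]
        have : ∀ i ∈ Finset.range m,
            (∑ j ∈ Finset.range (k + 1 + 1), c i * T (k + 1 - m + i) j) = c i := by
          intro i hi
          rw [← Finset.mul_sum, hextsum _ (hlt i (Finset.mem_range.mp hi)), mul_one]
        rw [Finset.sum_congr rfl this]
        have := s.coef_sum k
        rw [Finset.sum_range_succ] at this
        exact this
      · exact crop_combine_aux k m hm1 hm2 c T (s.x 0) (s.xt (k + 1)) s.x s.xt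
          (fun i hi => by
            rw [(hT _ (hlt i hi)).2.2.1, hext _ (hlt i hi)])
          (s.x_succ k)
      · exact crop_combine_aux k m hm1 hm2 c T (s.fc 0) (s.ft (k + 1)) s.fc s.ft
          (fun i hi => by
            rw [(hT _ (hlt i hi)).2.2.2, hext _ (hlt i hi)])
          (s.fc_succ k)
  intro k
  obtain ⟨t, _, h1, h2, h3⟩ := main k
  exact ⟨t, h1, h2, h3⟩
end

section
/- CROP(1) is ORTHOMIN(0) (base case of Theorem 4.5): In the linear setting f(x) = b − A·x, consider a CROP sequence with truncation parameter m_{k+1} = 1 for all k and least-squares optimal coefficients, so that x_C^(k+1) = (1 − α^(k+1))·x_C^(k) + α^(k+1)·x̃_C^(k+1) and f_C^(k+1) = (1 − α^(k+1))·f_C^(k) + α^(k+1)·f̃_C^(k+1) with α^(k+1) ∈ ℝ minimizing ‖f_C^(k+1)‖₂. If A·f_C^(k) ≠ 0, then the minimizer is α^(k+1) = ⟨f_C^(k), A·f_C^(k)⟩ / ⟨A·f_C^(k), A·f_C^(k)⟩, and the updates take the ORTHOMIN(0) (minimal-residual) form x_C^(k+1) = x_C^(k) + α^(k+1)·f_C^(k)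 and f_C^(k+1) = f_C^(k) − α^(k+1)·A·f_C^(k), with f_C^(k+1) orthogonal to A·f_C^(k). -/
open scoped RealInnerProductSpace

lemma min_quad_aux {n : ℕ} (u v : Euc n) (hv : v ≠ 0) (c : ℝ)
    (h : ∀ t : ℝ, ‖u - c • v‖ ≤ ‖u - t • v‖) :
    c = ⟪u, v⟫ / ⟪v, v⟫ := by
  set V : ℝ := ⟪v, v⟫ with hV
  set I : ℝ := ⟪u, v⟫ with hI
  have hVpos : 0 < V := by
    have h1 : 0 < ‖v‖ := norm_pos_iff.mpr hv
    have h2 : V = ‖v‖ ^ 2 := real_inner_self_eq_norm_sq v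
    nlinarith
  have hVne : V ≠ 0 := ne_of_gt hVpos
  have hexp : ∀ t : ℝ, ‖u - t • v‖ ^ 2 = ‖u‖ ^ 2 - 2 * t * I + t ^ 2 * V := by
    intro t
    rw [@norm_sub_sq_real, real_inner_smul_right, norm_smul, Real.norm_eq_abs, mul_pow,
      sq_abs, hV, real_inner_self_eq_norm_sq]
    ring
  have h2 := h (I / V)
  have h3 : ‖u - c • v‖ ^ 2 ≤ ‖u - (I / V) • v‖ ^ 2 :=
    pow_le_pow_left₀ (norm_nonneg _) h2 2
  rw [hexp, hexp] at h3
  have h4 : c ^ 2 * V - 2 * c * I + I ^ 2 / V ≤ 0 := by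
    have e1 : (I / V) ^ 2 * V = I ^ 2 / V := by field_simp
    have e2 : 2 * (I / V) * I = 2 * (I ^ 2 / V) := by ring
    linarith
  have h5 : (c * V - I) ^ 2 = V * (c ^ 2 * V - 2 * c * I + I ^ 2 / V) := by
    field_simp; ring
  have h6 : (c * V - I) ^ 2 ≤ 0 := by
    rw [h5]
    exact mul_nonpos_of_nonneg_of_nonpos (le_of_lt hVpos) h4
  have h7 : c * V - I = 0 := by nlinarith [sq_nonneg (c * V - I)]
  field_simp
  linarith

/-- **Base case of Theorem 4.5: CROP(1) is ORTHOMIN(0).** In the linear setting, for a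
CROP sequence with truncation parameter `m = 1` and least-squares optimal coefficients,
if `A f_C^(k) ≠ 0` then the optimal mixing coefficient is
`α = ⟪f_C^(k), A f_C^(k)⟫ / ⟪A f_C^(k), A f_C^(k)⟫`, the updates take the
minimal-residual (ORTHOMIN(0)) form, and the new residual is orthogonal to `A f_C^(k)`. -/
theorem crop1_is_orthomin0 {n : ℕ}
    (A : Euc n →L[ℝ] Euc n) (b : Euc n)
    (s : CROPSeq n (fun x => b - A x))
    (hm : ∀ k : ℕ, s.m (k + 1) = 1) (hopt : s.Optimal)
    (k : ℕ) (hnz : A (s.fc k) ≠ 0) :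
    s.coef (k + 1) 1 = ⟪s.fc k, A (s.fc k)⟫ / ⟪A (s.fc k), A (s.fc k)⟫ ∧
    s.x (k + 1) = s.x k +
      (⟪s.fc k, A (s.fc k)⟫ / ⟪A (s.fc k), A (s.fc k)⟫) • s.fc k ∧
    s.fc (k + 1) = s.fc k -
      (⟪s.fc k, A (s.fc k)⟫ / ⟪A (s.fc k), A (s.fc k)⟫) • A (s.fc k) ∧
    ⟪s.fc (k + 1), A (s.fc k)⟫ = 0 := by
  -- residual identity
  have hres : ∀ j, s.fc j = b - A (s.x j) := by
    intro j
    induction j with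
    | zero => simpa using s.fc_zero
    | succ j ih =>
      have hx := s.x_succ j
      have hf := s.fc_succ j
      have hsum := s.coef_sum j
      rw [hm j] at hx hf hsum
      simp only [Finset.sum_range_succ, Finset.sum_range_zero, zero_add,
        Nat.add_sub_cancel, Nat.add_zero] at hx hf hsum
      have hc0 : s.coef (j + 1) 0 = 1 - s.coef (j + 1) 1 := by linarith
      rw [hf, hx, s.ft_succ, s.xt_succ, ih, hc0]
      simp only [map_add, map_smul, map_sub]
      module
  -- with m = 1 the updates read
  have hx := s.x_succ k
  have hf := s.fc_succ k
  have hsum := s.coef_sum k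
  rw [hm k] at hx hf hsum
  simp only [Finset.sum_range_succ, Finset.sum_range_zero, zero_add,
    Nat.add_sub_cancel, Nat.add_zero] at hx hf hsum
  have hc0 : s.coef (k + 1) 0 = 1 - s.coef (k + 1) 1 := by linarith
  set c : ℝ := s.coef (k + 1) 1 with hc
  have hft : s.ft (k + 1) = s.fc k - A (s.fc k) := by
    rw [s.ft_succ, s.xt_succ, hres k]
    simp only [map_add]
    abel
  have hfc1 : s.fc (k + 1) = s.fc k - c • A (s.fc k) := by
    rw [hf, hft, hc0]
    module
  -- optimality gives the minimization property
  have hmin : ∀ t : ℝ, ‖s.fc k - c • A (s.fc k)‖ ≤ ‖s.fc k - t • A (s.fc k)‖ := by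
    intro t
    have hβ := hopt k (fun i => if i = 0 then 1 - t else t)
    rw [hm k] at hβ
    simp only [Finset.sum_range_succ, Finset.sum_range_zero, zero_add,
      Nat.add_sub_cancel, Nat.add_zero, if_pos rfl, if_true, eq_self_iff_true,
      if_neg (by norm_num : (1 : ℕ) ≠ 0)] at hβ
    have hβ' := hβ (by norm_num)
    rw [hfc1] at hβ'
    refine hβ'.trans (le_of_eq ?_)
    rw [hft]
    congr 1
    module
  have hcval : c = ⟪s.fc k, A (s.fc k)⟫ / ⟪A (s.fc k), A (s.fc k)⟫ :=
    min_quad_aux (s.fc k) (A (s.fc k)) hnz c hmin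
  refine ⟨hcval, ?_, ?_, ?_⟩
  · rw [hx, s.xt_succ, hc0, ← hcval]
    module
  · rw [hfc1, hcval]
  · rw [hfc1, hcval, inner_sub_left, real_inner_smul_left]
    have hVne : ⟪A (s.fc k), A (s.fc k)⟫ ≠ 0 := by
      intro h0
      exact hnz (inner_self_eq_zero.mp h0)
    rw [div_mul_cancel₀ _ hVne, sub_self]
end

section
/- Orthogonality of CROP(m) control residuals for linear problems (orthogonality relations in the proof of Theorem 4.5): In the linear setting f(x) = b − A·x, let (x_C^(k), f_C^(k)) be a CROP sequence with truncation parameters m_{k+1} ≥ 1 and least-squares optimal coefficients. Then for every k, the new control residual f_C^(k+1) is orthogonal to A·(x_C^(j+1) − x_C^(j)) for each j with k+1−m_{k+1} ≤ j ≤ k−1, and orthogonal to A·f_C^(k). (Equivalently, f_C^(k+1) is orthogonal to the difference vectors Δf_C^(j) = f_C^(j+1) − f_C^(j) = −A·(x_C^(j+1) − x_C^(j)) in the active window and to f̃_C^(k+1) − f_C^(k) = −A·f_C^(k).) -/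
open scoped RealInnerProductSpace

lemma min_inner_zero {n : ℕ} (u d : Euc n)
    (h : ∀ t : ℝ, ‖u‖ ≤ ‖u + t • d‖) : ⟪u, d⟫ = 0 := by
  by_cases hd : d = 0
  · simp [hd]
  have hD : (0:ℝ) < ‖d‖ ^ 2 := by
    have : 0 < ‖d‖ := norm_pos_iff.mpr hd
    positivity
  set c : ℝ := ⟪u, d⟫ with hc
  set t : ℝ := -c / ‖d‖ ^ 2 with ht
  have h1 : ‖u‖ ^ 2 ≤ ‖u + t • d‖ ^ 2 := by
    have := h t
    nlinarith [norm_nonneg u, norm_nonneg (u + t • d)]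
  have h2 : ‖u + t • d‖ ^ 2 = ‖u‖ ^ 2 + 2 * (t * c) + t ^ 2 * ‖d‖ ^ 2 := by
    rw [norm_add_sq_real, real_inner_smul_right, norm_smul, mul_pow,
      Real.norm_eq_abs, sq_abs, ← hc]
  have h3 : 0 ≤ 2 * (t * c) + t ^ 2 * ‖d‖ ^ 2 := by linarith
  have h4 : t * c = -c ^ 2 / ‖d‖ ^ 2 := by rw [ht]; ring
  have h5 : t ^ 2 * ‖d‖ ^ 2 = c ^ 2 / ‖d‖ ^ 2 := by
    rw [ht]; field_simp
  rw [h4, h5] at h3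
  have h6 : 0 ≤ -(c ^ 2 / ‖d‖ ^ 2) := by
    have he : 2 * (-c ^ 2 / ‖d‖ ^ 2) + c ^ 2 / ‖d‖ ^ 2 = -(c ^ 2 / ‖d‖ ^ 2) := by ring
    linarith [he ▸ h3]
  have hlink : c ^ 2 = (c ^ 2 / ‖d‖ ^ 2) * ‖d‖ ^ 2 := by field_simp
  have h7 : c ^ 2 ≤ 0 := by nlinarith
  have : c ^ 2 = 0 := le_antisymm h7 (sq_nonneg c)
  exact pow_eq_zero_iff (by norm_num) |>.mp this

/-- **Orthogonality relations from the proof of Theorem 4.5.** In the linear setting,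
for a CROP sequence with least-squares optimal coefficients, the new control residual
`f_C^(k+1)` is orthogonal to `A (x_C^(j+1) - x_C^(j))` for every `j` in the active
window `k+1-m_(k+1) ≤ j ≤ k-1`, and orthogonal to `A f_C^(k)`. -/
theorem crop_residual_orthogonality {n : ℕ}
    (A : Euc n →L[ℝ] Euc n) (b : Euc n)
    (s : CROPSeq n (fun x => b - A x)) (hopt : s.Optimal) :
    ∀ k : ℕ,
      (∀ j : ℕ, k + 1 - s.m (k + 1) ≤ j → j + 1 ≤ k →
        ⟪s.fc (k + 1), A (s.x (j + 1) - s.x j)⟫ = 0) ∧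
      ⟪s.fc (k + 1), A (s.fc k)⟫ = 0 := by
  -- Step 1 : the control residuals are genuine residuals, `fc j = b - A (x j)`.
  have hfc : ∀ j, s.fc j = b - A (s.x j) := by
    intro j
    induction j using Nat.strong_induction_on with
    | _ j ih =>
      match j with
      | 0 => simpa using s.fc_zero
      | k + 1 =>
        have hm1 := s.m_pos k
        have hm2 := s.m_le k
        have hft : s.ft (k + 1) = b - A (s.xt (k + 1)) := by
          rw [s.ft_succ]
        rw [s.fc_succ k, s.x_succ k, hft]
        have hrw : ∀ i ∈ Finset.range (s.m (k + 1)),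
            s.coef (k + 1) i • s.fc (k + 1 - s.m (k + 1) + i)
              = s.coef (k + 1) i • (b - A (s.x (k + 1 - s.m (k + 1) + i))) := by
          intro i hi
          rw [ih _ (by simp only [Finset.mem_range] at hi; omega)]
        rw [Finset.sum_congr rfl hrw]
        have hb : (∑ i ∈ Finset.range (s.m (k + 1)), s.coef (k + 1) i • b)
            + s.coef (k + 1) (s.m (k + 1)) • b = b := by
          rw [← Finset.sum_range_succ (fun i => s.coef (k + 1) i • b),
            ← Finset.sum_smul, s.coef_sum k, one_smul]
        simp only [smul_sub, map_add, map_sum, map_smul, Finset.sum_sub_distrib]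
        have habel : ∀ p q r u : Euc n, (p - q) + (r - u) = (p + r) - (q + u) :=
          fun p q r u => by abel
        rw [habel, hb]
  intro k
  have hm1 := s.m_pos k
  have hm2 := s.m_le k
  set m := s.m (k + 1) with hm
  set α := s.coef (k + 1) with hα
  set V : ℕ → Euc n := fun i => if i < m then s.fc (k + 1 - m + i) else s.ft (k + 1) with hV
  have hVlt : ∀ i, i < m → V i = s.fc (k + 1 - m + i) := by
    intro i hi; simp only [hV, if_pos hi]
  have hVm : V m = s.ft (k + 1) := by simp only [hV, lt_irrefl, if_false]
  have hsum_eq : ∀ β : ℕ → ℝ,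
      (∑ i ∈ Finset.range m, β i • s.fc (k + 1 - m + i)) + β m • s.ft (k + 1)
        = ∑ i ∈ Finset.range (m + 1), β i • V i := by
    intro β
    rw [Finset.sum_range_succ, hVm]
    congr 1
    exact Finset.sum_congr rfl fun i hi => by
      rw [hVlt i (Finset.mem_range.mp hi)]
  have hgα : s.fc (k + 1) = ∑ i ∈ Finset.range (m + 1), α i • V i := by
    rw [s.fc_succ k, ← hm, ← hα, hsum_eq]
  -- Step 2 : orthogonality to all difference directions
  have horth : ∀ i₁ i₂, i₁ < m + 1 → i₂ < m + 1 →
      ⟪s.fc (k + 1), V i₁ - V i₂⟫ = 0 := by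
    intro i₁ i₂ h1 h2
    rcases eq_or_ne i₁ i₂ with rfl | hne
    · simp
    apply min_inner_zero
    intro t
    set β : ℕ → ℝ := fun i =>
      α i + (t * (if i = i₁ then 1 else 0) - t * (if i = i₂ then 1 else 0)) with hβ
    have hβsum : ∑ i ∈ Finset.range (m + 1), β i = 1 := by
      simp only [hβ, Finset.sum_add_distrib, Finset.sum_sub_distrib, mul_ite,
        mul_one, mul_zero, Finset.sum_ite_eq', Finset.mem_range, h1, h2, if_true]
      have hαsum : ∑ i ∈ Finset.range (m + 1), α i = 1 := s.coef_sum k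
      rw [hαsum]
      ring
    have hle := hopt k β hβsum
    have hgβ : (∑ i ∈ Finset.range m, β i • s.fc (k + 1 - m + i)) + β m • s.ft (k + 1)
        = s.fc (k + 1) + t • (V i₁ - V i₂) := by
      rw [hsum_eq, hgα]
      simp only [hβ, add_smul, sub_smul, mul_ite, mul_one, mul_zero, ite_smul,
        zero_smul, Finset.sum_add_distrib, Finset.sum_sub_distrib,
        Finset.sum_ite_eq', Finset.mem_range, h1, h2, if_true, smul_sub]
    rw [hgβ] at hle
    exact hle
  constructor
  · intro j hj1 hj2
    have e1 : k + 1 - m + (j - (k + 1 - m)) = j := by omega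
    have e2 : k + 1 - m + (j - (k + 1 - m) + 1) = j + 1 := by omega
    have hi1 : j - (k + 1 - m) < m := by omega
    have hi2 : j - (k + 1 - m) + 1 < m := by omega
    have hA : A (s.x (j + 1) - s.x j) = V (j - (k + 1 - m)) - V (j - (k + 1 - m) + 1) := by
      rw [hVlt _ hi1, hVlt _ hi2, e1, e2, hfc j, hfc (j + 1), map_sub]
      abel
    rw [hA]
    exact horth _ _ (by omega) (by omega)
  · have e : k + 1 - m + (m - 1) = k := by omega
    have hft2 : s.ft (k + 1) = s.fc k - A (s.fc k) := by
      calc s.ft (k + 1) = b - A (s.x k + s.fc k) := by rw [s.ft_succ k, s.xt_succ k]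
        _ = (b - A (s.x k)) - A (s.fc k) := by rw [map_add]; abel
        _ = s.fc k - A (s.fc k) := by rw [← hfc k]
    have hA : A (s.fc k) = V (m - 1) - V m := by
      rw [hVlt _ (by omega), e, hVm, hft2]
      abel
    rw [hA]
    exact horth _ _ (by omega) (by omega)
end

section
/- Trial vectors of untruncated CROP remain in the Krylov affine space (part of the proof of Theorem 4.3): In the linear setting f(x) = b − A·x, let (x_C^(k), f_C^(k), x̃_C^(k), f̃_C^(k)) be a CROP sequence with arbitrary truncation parameters and arbitrary coefficient vectors summing to 1, and set r^(0) = b − A·x_C^(0). Then for every k ∈ ℕ, the iterate x_C^(k) and the trial vector x̃_C^(k+1) lie in the affine Krylov spaces: x_C^(k) ∈ x_C^(0) + K_k(A, r^(0)) and x̃_C^(k+1) ∈ x_C^(0) + K_{k+1}(A, r^(0)), where K_j(A, r^(0)) = span{r^(0), A·r^(0), …, A^{j−1}·r^(0)} and K_0 = {0}. -/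
lemma krylov_apply_mem {n : ℕ} (A : Euc n →L[ℝ] Euc n) (v : Euc n) (j : ℕ) {w : Euc n}
    (hw : w ∈ krylov A v j) : A w ∈ krylov A v (j + 1) := by
  induction hw using Submodule.span_induction with
  | mem x hx =>
    obtain ⟨i, hi, rfl⟩ := hx
    refine Submodule.subset_span ⟨i + 1, by omega, ?_⟩
    rw [pow_succ']; rfl
  | zero => simp
  | add x y _ _ hx hy => rw [map_add]; exact Submodule.add_mem _ hx hy
  | smul a x _ hx => rw [map_smul]; exact Submodule.smul_mem _ a hx

lemma crop_fc_eq {n : ℕ} (A : Euc n →L[ℝ] Euc n) (b : Euc n)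
    (s : CROPSeq n (fun x => b - A x)) : ∀ k, s.fc k = b - A (s.x k) := by
  intro k
  induction k using Nat.strong_induction_on with
  | _ k ih =>
    match k with
    | 0 => simpa using s.fc_zero
    | k + 1 =>
      have hm := s.m_pos k
      have hml := s.m_le k
      have hsum := s.coef_sum k
      rw [Finset.sum_range_succ] at hsum
      rw [s.fc_succ k, s.ft_succ k, s.x_succ k,
        Finset.sum_congr rfl (fun i hi => by
          rw [ih (k + 1 - s.m (k + 1) + i) (by simp at hi; omega)])]
      show _ = b - A _
      simp only [smul_sub, Finset.sum_sub_distrib, map_add, map_sum, map_smul, map_sub]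
      have h0 : (∑ i ∈ Finset.range (s.m (k + 1)), s.coef (k + 1) i • b)
          + s.coef (k + 1) (s.m (k + 1)) • b = b := by
        rw [← Finset.sum_smul, ← add_smul, hsum, one_smul]
      linear_combination (norm := module) h0

set_option maxHeartbeats 1000000 in
/-- **Part of the proof of Theorem 4.3.** In the linear setting, every CROP iterate
`x_C^(k)` lies in the affine Krylov space `x_C^(0) + K_k(A, r^(0))` and every trial
vector `x̃_C^(k+1)` lies in `x_C^(0) + K_(k+1)(A, r^(0))`, where `r^(0) = b - A x_C^(0)`. -/
theorem crop_iterates_in_affine_krylov {n : ℕ}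
    (A : Euc n →L[ℝ] Euc n) (b : Euc n)
    (s : CROPSeq n (fun x => b - A x)) :
    ∀ k : ℕ, s.x k - s.x 0 ∈ krylov A (b - A (s.x 0)) k ∧
      s.xt (k + 1) - s.x 0 ∈ krylov A (b - A (s.x 0)) (k + 1) := by
  have hfc := crop_fc_eq A b s
  set v := b - A (s.x 0) with hv
  have hxt : ∀ k, s.x k - s.x 0 ∈ krylov A v k →
      s.xt (k + 1) - s.x 0 ∈ krylov A v (k + 1) := by
    intro k hk
    rw [s.xt_succ k, hfc k]
    have h1 : s.x k - s.x 0 ∈ krylov A v (k + 1) := krylov_mono A v (Nat.le_succ k) hk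
    have h2 : v ∈ krylov A v (k + 1) :=
      Submodule.subset_span ⟨0, Nat.succ_pos k, by simp⟩
    have h3 : A (s.x k - s.x 0) ∈ krylov A v (k + 1) := krylov_apply_mem A v k hk
    have heq : s.x k + (b - A (s.x k)) - s.x 0
        = (s.x k - s.x 0) + (v - A (s.x k - s.x 0)) := by
      rw [hv, map_sub]; abel
    rw [heq]
    exact Submodule.add_mem _ h1 (Submodule.sub_mem _ h2 h3)
  have hx : ∀ k, s.x k - s.x 0 ∈ krylov A v k := by
    intro k
    induction k using Nat.strong_induction_on with
    | _ k ih =>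
      match k with
      | 0 => simpa using Submodule.zero_mem _
      | k + 1 =>
        have hm := s.m_pos k
        have hyt := hxt k (ih k (lt_add_one k))
        have hsum := s.coef_sum k
        rw [Finset.sum_range_succ] at hsum
        rw [s.x_succ k]
        have h0 : (∑ i ∈ Finset.range (s.m (k + 1)), s.coef (k + 1) i • s.x 0)
            + s.coef (k + 1) (s.m (k + 1)) • s.x 0 = s.x 0 := by
          rw [← Finset.sum_smul, ← add_smul, hsum, one_smul]
        have key : (∑ i ∈ Finset.range (s.m (k + 1)),
              s.coef (k + 1) i • s.x (k + 1 - s.m (k + 1) + i))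
            + s.coef (k + 1) (s.m (k + 1)) • s.xt (k + 1) - s.x 0
          = (∑ i ∈ Finset.range (s.m (k + 1)),
              s.coef (k + 1) i • (s.x (k + 1 - s.m (k + 1) + i) - s.x 0))
            + s.coef (k + 1) (s.m (k + 1)) • (s.xt (k + 1) - s.x 0) := by
          simp only [smul_sub, Finset.sum_sub_distrib]
          linear_combination (norm := module) h0
        rw [key]
        refine Submodule.add_mem _
          (Submodule.sum_mem _ fun i hi => Submodule.smul_mem _ _ ?_)
          (Submodule.smul_mem _ _ hyt)
        have hml := s.m_le k
        have hi' : k + 1 - s.m (k + 1) + i ≤ k := by simp at hi; omega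
        exact krylov_mono A v (by omega) (ih _ (by omega))
  exact fun k => ⟨hx k, hxt k (hx k)⟩
end
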